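/- arXiv:2403.08195 — 4 statements merged into one kernel-verified Lean document; each statement's English description precedes it below -/
import Mathlib

section
/- Let ρ be a density matrix on ℂ² ⊗ ℂ^d, i.e., a positive semidefinite complex matrix indexed by Fin 2 × Fin d with trace 1, let U be a unitary d×d complex matrix, and let O₁₀ = |1⟩⟨0| ⊗ U be the Kronecker product of the 2×2 matrix whose only nonzero entry is a 1 in row 1, column 0 with U. Then |Tr(ρ · O₁₀)|² ≤ Tr(ρ · (|0⟩⟨0| ⊗ I)) · Tr(ρ · (|1⟩⟨1| ⊗ I)), and consequently |Tr(ρ · O₁₀)| ≤ 1/2. -/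
/-!
`(X, Y) ↦ Tr(ρ Xᴴ Y)` is a positive semidefinite sesquilinear form on matrices (Mathlib's
`Matrix.toMatrixInnerProductSpace`), so it satisfies Cauchy–Schwarz. Taking `X = |1⟩⟨1| ⊗ I` and
`Y = O₁₀` gives `XᴴY = O₁₀`, `XᴴX = |1⟩⟨1| ⊗ I` and `YᴴY = |0⟩⟨0| ⊗ UᴴU = |0⟩⟨0| ⊗ I`. The two
populations are nonnegative and sum to `Tr ρ = 1`, so their product is at most `1/4`.
-/

open Matrix Kronecker ComplexOrder

namespace Matrix.PosSemidef

variable {𝕜 n : Type*} [RCLike 𝕜] [Fintype n] {ρ : Matrix n n 𝕜}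

theorem norm_trace_mul_conjTranspose_mul_sq_le (hρ : ρ.PosSemidef) (X Y : Matrix n n 𝕜) :
    ‖(ρ * (Xᴴ * Y)).trace‖ ^ 2 ≤
      RCLike.re (ρ * (Xᴴ * X)).trace * RCLike.re (ρ * (Yᴴ * Y)).trace := by
  let := ρ.toMatrixSeminormedAddCommGroup hρ
  let := ρ.toMatrixInnerProductSpace hρ
  have trace_eq_inner (A B : Matrix n n 𝕜) : (ρ * (Aᴴ * B)).trace = inner 𝕜 A B := by
    rw [trace_mul_cycle', ← Matrix.mul_assoc]; rfl
  simp only [trace_eq_inner, sq]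
  have := inner_mul_inner_self_le (𝕜 := 𝕜) X Y
  rwa [norm_inner_symm Y X] at this

theorem re_trace_mul_conjTranspose_mul_self_nonneg (hρ : ρ.PosSemidef) (X : Matrix n n 𝕜) :
    0 ≤ RCLike.re (ρ * (Xᴴ * X)).trace := by
  rw [trace_mul_cycle', ← Matrix.mul_assoc]
  exact (RCLike.nonneg_iff.mp (hρ.mul_mul_conjTranspose_same X).trace_nonneg).1

end Matrix.PosSemidef

theorem Matrix.conjTranspose_single_one_kronecker_mul_single_one_kronecker
    {α ι m : Type*} [CommSemiring α] [StarRing α] [Fintype ι] [DecidableEq ι] [Fintype m]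
    (i j k : ι) (A B : Matrix m m α) :
    (single i j (1 : α) ⊗ₖ A)ᴴ * (single i k 1 ⊗ₖ B) = single j k 1 ⊗ₖ (Aᴴ * B) := by
  rw [conjTranspose_kronecker, conjTranspose_single, star_one, ← mul_kronecker_mul,
    single_mul_single_same, mul_one]

theorem Matrix.single_zero_zero_add_single_one_one_fin_two {α : Type*} [Semiring α] :
    single (0 : Fin 2) 0 (1 : α) + single 1 1 1 = (1 : Matrix (Fin 2) (Fin 2) α) := by
  ext i j
  fin_cases i <;> fin_cases j <;> simp

/-- For a density matrix `ρ` on `ℂ² ⊗ ℂ^d`, a unitary `U`, and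
`O₁₀ = |1⟩⟨0| ⊗ U`, we have
`|Tr(ρ O₁₀)|² ≤ Tr(ρ (|0⟩⟨0| ⊗ I)) · Tr(ρ (|1⟩⟨1| ⊗ I))` and `|Tr(ρ O₁₀)| ≤ 1/2`. -/
theorem stmt_0 {d : ℕ}
    (ρ : Matrix (Fin 2 × Fin d) (Fin 2 × Fin d) ℂ)
    (hρ : ρ.PosSemidef) (hρtr : ρ.trace = 1)
    (U : Matrix (Fin d) (Fin d) ℂ)
    (hU : Uᴴ * U = 1 ∧ U * Uᴴ = 1) :
    ‖(ρ * (Matrix.single (1 : Fin 2) (0 : Fin 2) (1 : ℂ) ⊗ₖ U)).trace‖ ^ 2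
      ≤ ((ρ * (Matrix.single (0 : Fin 2) (0 : Fin 2) (1 : ℂ) ⊗ₖ (1 : Matrix (Fin d) (Fin d) ℂ))).trace).re
        * ((ρ * (Matrix.single (1 : Fin 2) (1 : Fin 2) (1 : ℂ) ⊗ₖ (1 : Matrix (Fin d) (Fin d) ℂ))).trace).re
    ∧ ‖(ρ * (Matrix.single (1 : Fin 2) (0 : Fin 2) (1 : ℂ) ⊗ₖ U)).trace‖ ≤ 1 / 2 := by
  set P₀ : Matrix (Fin 2 × Fin d) (Fin 2 × Fin d) ℂ := single 0 0 1 ⊗ₖ 1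
  set P₁ : Matrix (Fin 2 × Fin d) (Fin 2 × Fin d) ℂ := single 1 1 1 ⊗ₖ 1
  set O : Matrix (Fin 2 × Fin d) (Fin 2 × Fin d) ℂ := single 1 0 1 ⊗ₖ U
  obtain ⟨hP₁O, hP₁P₁, hP₀P₀⟩ : P₁ᴴ * O = O ∧ P₁ᴴ * P₁ = P₁ ∧ P₀ᴴ * P₀ = P₀ := by
    refine ⟨?_, ?_, ?_⟩ <;>
      rw [conjTranspose_single_one_kronecker_mul_single_one_kronecker, conjTranspose_one,
        Matrix.one_mul]
  have hOO : Oᴴ * O = P₀ := by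
    rw [conjTranspose_single_one_kronecker_mul_single_one_kronecker, hU.1]
  have hcs := hρ.norm_trace_mul_conjTranspose_mul_sq_le P₁ O
  have h₀ := hρ.re_trace_mul_conjTranspose_mul_self_nonneg P₀
  have h₁ := hρ.re_trace_mul_conjTranspose_mul_self_nonneg P₁
  rw [hP₁O, hP₁P₁, hOO] at hcs
  rw [hP₀P₀] at h₀
  rw [hP₁P₁] at h₁
  simp only [RCLike.re_to_complex] at hcs h₀ h₁
  have hsum : (ρ * P₀).trace.re + (ρ * P₁).trace.re = 1 := by
    rw [← Complex.add_re, ← trace_add, ← Matrix.mul_add, ← add_kronecker,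
      single_zero_zero_add_single_one_one_fin_two, one_kronecker_one, Matrix.mul_one, hρtr,
      Complex.one_re]
  refine ⟨by linarith [mul_comm (ρ * P₀).trace.re (ρ * P₁).trace.re], ?_⟩
  nlinarith [norm_nonneg (ρ * O).trace, sq_nonneg ((ρ * P₀).trace.re - (ρ * P₁).trace.re)]
end

section
/- Let H and P be d×d complex matrices with P² = I and P·H·P = −H, and let T ∈ ℝ. Define the following maps on pairs (u, v) ∈ ℂ^d × ℂ^d (representing the clock-0 and clock-1 components of a state on a clock qubit tensored with ℂ^d): CP(u, v) = (u, P·v); E_t(u, v) = (exp(−i·t·H)·u, exp(−i·t·H)·v); SW(u, v) = (v, u). Then for every φ ∈ ℂ^d, the composition E_{T/2}(SW(CP(E_{T/2}(CP(φ, φ))))) equals (φ, exp(−i·T·H)·φ). -/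
/-!
Since `P` is an involution anticommuting with `H`, conjugation by `P` reverses time:
`P exp(-itH) P = exp(itH)`. The component that starts on clock `1` is therefore evolved
forward, reflected by `P`, and evolved forward again, which undoes the first evolution and
returns `φ`; the component that starts on clock `0` is only swapped, so it accumulates the two
half-steps into `exp(-iTH) φ`.
-/

open Matrix

variable {d : ℕ}

/-- Controlled-`P` gate on a clock qubit: acts as `P` on the clock-1 component. -/
noncomputable def CP (P : Matrix (Fin d) (Fin d) ℂ) (w : (Fin d → ℂ) × (Fin d → ℂ)) :
    (Fin d → ℂ) × (Fin d → ℂ) :=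
  (w.1, P.mulVec w.2)

/-- Time evolution under `H` for time `t` on both clock components. -/
noncomputable def Ev (H : Matrix (Fin d) (Fin d) ℂ) (t : ℝ)
    (w : (Fin d → ℂ) × (Fin d → ℂ)) : (Fin d → ℂ) × (Fin d → ℂ) :=
  ((NormedSpace.exp ((-(Complex.I * (t : ℂ))) • H)).mulVec w.1,
   (NormedSpace.exp ((-(Complex.I * (t : ℂ))) • H)).mulVec w.2)

/-- Pauli-`X` on the clock qubit: swaps the two components. -/
def SW (w : (Fin d → ℂ) × (Fin d → ℂ)) : (Fin d → ℂ) × (Fin d → ℂ) :=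
  (w.2, w.1)

namespace Matrix

open NormedSpace

variable {m 𝔸 : Type*} [Fintype m] [DecidableEq m]
  [NormedRing 𝔸] [NormedAlgebra ℚ 𝔸] [CompleteSpace 𝔸]

theorem exp_mul_exp_neg (A : Matrix m m 𝔸) : exp A * exp (-A) = 1 := by
  rw [← exp_add_of_commute A (-A) (Commute.neg_right (Commute.refl A)), add_neg_cancel,
    exp_zero]

theorem exp_add_self (A : Matrix m m 𝔸) : exp (A + A) = exp A * exp A :=
  exp_add_of_commute A A (Commute.refl A)

theorem conj_exp_of_involutive_of_anticomm {P A : Matrix m m 𝔸} (hP : P * P = 1)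
    (hA : P * A * P = -A) : P * exp A * P = exp (-A) := by
  let U : (Matrix m m 𝔸)ˣ := ⟨P, P, hP, hP⟩
  rw [← hA]
  exact (exp_units_conj U A).symm

theorem exp_mul_conj_exp_of_involutive_of_anticomm {P A : Matrix m m 𝔸} (hP : P * P = 1)
    (hA : P * A * P = -A) : exp A * (P * exp A * P) = 1 := by
  rw [conj_exp_of_involutive_of_anticomm hP hA, exp_mul_exp_neg]

end Matrix

/-- The echo circuit
`E_{T/2} ∘ SW ∘ CP ∘ E_{T/2} ∘ CP` maps `(φ, φ)` to `(φ, exp(−iTH)·φ)`,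
i.e., it prepares the single-step history state. -/
theorem stmt_5 (H P : Matrix (Fin d) (Fin d) ℂ)
    (hP : P * P = 1) (hanti : P * H * P = -H) (T : ℝ) (φ : Fin d → ℂ) :
    Ev H (T / 2) (SW (CP P (Ev H (T / 2) (CP P (φ, φ)))))
      = (φ, (NormedSpace.exp ((-(Complex.I * (T : ℂ))) • H)).mulVec φ) := by
  set A : Matrix (Fin d) (Fin d) ℂ := (-(Complex.I * ((T / 2 : ℝ) : ℂ))) • H
  have hPA : P * A * P = -A := by
    simp only [A, Matrix.mul_smul, Matrix.smul_mul, hanti, smul_neg]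
  have hAA : A + A = (-(Complex.I * (T : ℂ))) • H := by
    rw [← add_smul]
    push_cast
    ring_nf
  simp only [Ev, CP, SW, ← hAA, exp_add_self, mulVec_mulVec]
  rw [← mul_assoc P, exp_mul_conj_exp_of_involutive_of_anticomm hP hPA, one_mulVec]
end

section
/- Let ρ be a density matrix on ℂ^d (a positive semidefinite d×d complex matrix with trace 1), let ψ ∈ ℂ^d be a unit vector, and let (E_x)_{x ∈ S} be a finite POVM on ℂ^d (a finite family of positive semidefinite matrices summing to the identity). Set δ_f = 1 − Re⟨ψ, ρψ⟩ and δ_p = 1 − Tr(ρ²). Then (1/2)·Σ_{x∈S} |Tr(E_x · ρ) − ⟨ψ, E_x ψ⟩| ≤ δ_f + √(δ_f − δ_f²/2 − δ_p/2). -/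
open Matrix ComplexOrder

/-!
Put `c = ⟨ψ, ρψ⟩ = 1 - δ_f`, `b = ρψ - cψ ⊥ ψ` and `R = (1 - |ψ⟩⟨ψ|) ρ (1 - |ψ⟩⟨ψ|) ≥ 0`.
Since `ρ` is Hermitian, `ρ - |ψ⟩⟨ψ| = R + (|ψ⟩⟨b| + |b⟩⟨ψ|) - δ_f |ψ⟩⟨ψ|` with `tr R = δ_f`.
Against a POVM each of the two positive terms contributes `δ_f` to `∑ₓ |tr(Eₓ ·)|`, and the
off-diagonal term at most `2‖b‖`, by Cauchy–Schwarz for each form `⟨·, Eₓ ·⟩` and then over `x`.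
Finally `tr ρ² = tr(Rρ) + 2‖b‖² + c²` with `tr(Rρ) ≥ 0` gives `‖b‖² ≤ δ_f - δ_f²/2 - δ_p/2`.
-/

namespace Matrix

variable {n 𝕜 : Type*} [Fintype n] [RCLike 𝕜]

theorem trace_mul_vecMulVec {R : Type*} [CommSemiring R] (A : Matrix n n R) (u w : n → R) :
    (A * vecMulVec u w).trace = w ⬝ᵥ A *ᵥ u := by
  rw [mul_vecMulVec, trace_vecMulVec, dotProduct_comm]

namespace PosSemidef

theorem exists_isHermitian_mul_self {A : Matrix n n 𝕜} (hA : A.PosSemidef) :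
    ∃ X : Matrix n n 𝕜, X.IsHermitian ∧ X * X = A := by
  classical
  open scoped MatrixOrder in
  obtain ⟨X, hX, -, hXX⟩ := CFC.exists_sqrt_of_isSelfAdjoint_of_quasispectrumRestricts
    hA.isHermitian (QuasispectrumRestricts.nnreal_of_nonneg hA.nonneg)
  exact ⟨X, hX, hXX⟩

theorem trace_mul_nonneg {A B : Matrix n n 𝕜} (hA : A.PosSemidef) (hB : B.PosSemidef) :
    0 ≤ (A * B).trace := by
  obtain ⟨X, hX, rfl⟩ := hB.exists_isHermitian_mul_self
  have h := (hA.conjTranspose_mul_mul_same X).trace_nonneg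
  rwa [hX.eq, ← trace_mul_cycle, mul_assoc] at h

theorem norm_dotProduct_mulVec_le {A : Matrix n n 𝕜} (hA : A.PosSemidef) (u v : n → 𝕜) :
    ‖star u ⬝ᵥ A *ᵥ v‖ ≤
      √(RCLike.re (star u ⬝ᵥ A *ᵥ u)) * √(RCLike.re (star v ⬝ᵥ A *ᵥ v)) := by
  obtain ⟨X, hX, rfl⟩ := hA.exists_isHermitian_mul_self
  have h_inner (w z : n → 𝕜) :
      star w ⬝ᵥ (X * X) *ᵥ z = inner 𝕜 (WithLp.toLp 2 (X *ᵥ w)) (WithLp.toLp 2 (X *ᵥ z)) := by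
    rw [EuclideanSpace.inner_toLp_toLp, star_mulVec, hX.eq, dotProduct_comm (X *ᵥ z),
      ← dotProduct_mulVec, mulVec_mulVec]
  simp only [h_inner, ← norm_eq_sqrt_re_inner]
  exact norm_inner_le_norm _ _

end PosSemidef

variable {ι : Type*} [Fintype ι] {E : ι → Matrix n n 𝕜}

theorem sum_norm_trace_mul_eq [DecidableEq n] (hE : ∀ x, (E x).PosSemidef) (hEsum : ∑ x, E x = 1)
    {A : Matrix n n 𝕜} (hA : A.PosSemidef) : ∑ x, ‖(E x * A).trace‖ = ‖A.trace‖ := by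
  have h_sum : ∑ x, (E x * A).trace = A.trace := by
    rw [← trace_sum, ← Finset.sum_mul, hEsum, one_mul]
  apply RCLike.ofReal_injective (K := 𝕜)
  simp only [RCLike.ofReal_sum, RCLike.norm_of_nonneg' ((hE _).trace_mul_nonneg hA),
    RCLike.norm_of_nonneg' hA.trace_nonneg, h_sum]

theorem sum_norm_dotProduct_mulVec_le [DecidableEq n] (hE : ∀ x, (E x).PosSemidef)
    (hEsum : ∑ x, E x = 1) (u v : n → 𝕜) :
    ∑ x, ‖star u ⬝ᵥ E x *ᵥ v‖ ≤ √(RCLike.re (star u ⬝ᵥ u)) * √(RCLike.re (star v ⬝ᵥ v)) := by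
  have h_sum (w : n → 𝕜) : ∑ x, RCLike.re (star w ⬝ᵥ E x *ᵥ w) = RCLike.re (star w ⬝ᵥ w) := by
    rw [← map_sum, ← dotProduct_sum, ← sum_mulVec, hEsum, one_mulVec]
  calc ∑ x, ‖star u ⬝ᵥ E x *ᵥ v‖
      ≤ ∑ x, √(RCLike.re (star u ⬝ᵥ E x *ᵥ u)) * √(RCLike.re (star v ⬝ᵥ E x *ᵥ v)) :=
        Finset.sum_le_sum fun x _ ↦ (hE x).norm_dotProduct_mulVec_le u v
    _ ≤ √(∑ x, RCLike.re (star u ⬝ᵥ E x *ᵥ u)) * √(∑ x, RCLike.re (star v ⬝ᵥ E x *ᵥ v)) :=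
        Real.sum_sqrt_mul_sqrt_le _ (fun x ↦ (hE x).re_dotProduct_nonneg u)
          (fun x ↦ (hE x).re_dotProduct_nonneg v)
    _ = _ := by rw [h_sum, h_sum]

section PureState

variable (ρ : Matrix n n 𝕜) (ψ : n → 𝕜)

def orthogonalComponent : n → 𝕜 := ρ *ᵥ ψ - (star ψ ⬝ᵥ ρ *ᵥ ψ) • ψ

def orthogonalCompression [DecidableEq n] : Matrix n n 𝕜 :=
  (1 - vecMulVec ψ (star ψ)) * ρ * (1 - vecMulVec ψ (star ψ))

variable {ρ ψ}

theorem vecMulVec_mul_vecMulVec_self (hψ : star ψ ⬝ᵥ ψ = 1) :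
    vecMulVec ψ (star ψ) * vecMulVec ψ (star ψ) = vecMulVec ψ (star ψ) := by
  rw [vecMulVec_mul, vecMul_vecMulVec, hψ, one_smul]

theorem star_dotProduct_orthogonalComponent (hψ : star ψ ⬝ᵥ ψ = 1) :
    star ψ ⬝ᵥ ρ.orthogonalComponent ψ = 0 := by
  rw [orthogonalComponent, dotProduct_sub, dotProduct_smul, hψ, smul_eq_mul, mul_one, sub_self]

theorem star_orthogonalComponent_dotProduct (hψ : star ψ ⬝ᵥ ψ = 1) :
    star (ρ.orthogonalComponent ψ) ⬝ᵥ ψ = 0 := by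
  rw [star_dotProduct, star_dotProduct_orthogonalComponent hψ, star_zero]

variable [DecidableEq n]

theorem IsHermitian.eq_orthogonalCompression_add (hρ : ρ.IsHermitian) :
    ρ = ρ.orthogonalCompression ψ
      + (vecMulVec ψ (star (ρ.orthogonalComponent ψ))
        + vecMulVec (ρ.orthogonalComponent ψ) (star ψ))
      + (star ψ ⬝ᵥ ρ *ᵥ ψ) • vecMulVec ψ (star ψ) := by
  set P := vecMulVec ψ (star ψ)
  set c := star ψ ⬝ᵥ ρ *ᵥ ψ
  have hc : star c = c := RCLike.conj_eq_iff_im.mpr (hρ.im_star_dotProduct_mulVec_self ψ)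
  have hPρ : vecMulVec ψ (star (ρ.orthogonalComponent ψ)) = P * ρ - c • P := by
    rw [orthogonalComponent, star_sub, star_smul, hc, star_mulVec, hρ.eq, vecMulVec_sub,
      vecMulVec_smul, vecMulVec_mul]
  have hρP : vecMulVec (ρ.orthogonalComponent ψ) (star ψ) = ρ * P - c • P := by
    rw [orthogonalComponent, sub_vecMulVec, smul_vecMulVec, mul_vecMulVec]
  have hPρP : P * ρ * P = c • P := by
    rw [vecMulVec_mul, vecMulVec_mul, vecMul_vecMulVec, ← dotProduct_mulVec, vecMulVec_smul]
  have h_expand : ρ.orthogonalCompression ψ = ρ - P * ρ - ρ * P + P * ρ * P := by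
    rw [orthogonalCompression]; noncomm_ring
  rw [h_expand, hPρ, hρP, hPρP]
  abel

theorem trace_orthogonalCompression (hψ : star ψ ⬝ᵥ ψ = 1) :
    (ρ.orthogonalCompression ψ).trace = ρ.trace - star ψ ⬝ᵥ ρ *ᵥ ψ := by
  have h_proj : (1 - vecMulVec ψ (star ψ)) * (1 - vecMulVec ψ (star ψ)) =
      1 - vecMulVec ψ (star ψ) := by
    rw [sub_mul, mul_sub, mul_sub, vecMulVec_mul_vecMulVec_self hψ]; noncomm_ring
  rw [orthogonalCompression, trace_mul_cycle, h_proj, sub_mul, one_mul, trace_sub,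
    trace_mul_comm, trace_mul_vecMulVec]

theorem PosSemidef.orthogonalCompression (hρ : ρ.PosSemidef) :
    (ρ.orthogonalCompression ψ).PosSemidef := by
  have h := hρ.mul_mul_conjTranspose_same (1 - vecMulVec ψ (star ψ))
  rwa [conjTranspose_sub, conjTranspose_one, (posSemidef_vecMulVec_self_star ψ).isHermitian.eq] at h

theorem IsHermitian.trace_mul_self_eq (hρ : ρ.IsHermitian) (hψ : star ψ ⬝ᵥ ψ = 1) :
    (ρ * ρ).trace = (ρ.orthogonalCompression ψ * ρ).trace
      + 2 * (star (ρ.orthogonalComponent ψ) ⬝ᵥ ρ.orthogonalComponent ψ)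
      + (star ψ ⬝ᵥ ρ *ᵥ ψ) ^ 2 := by
  set b := ρ.orthogonalComponent ψ
  set c := star ψ ⬝ᵥ ρ *ᵥ ψ
  have hρψ : ρ *ᵥ ψ = b + c • ψ := (sub_add_cancel (ρ *ᵥ ψ) (c • ψ)).symm
  have hψρ : star ψ ᵥ* ρ = star b + star c • star ψ := by
    rw [← star_smul, ← star_add, ← hρψ, star_mulVec, hρ.eq]
  have h_left : (vecMulVec ψ (star b) * ρ).trace = star b ⬝ᵥ b := by
    rw [trace_mul_comm, trace_mul_vecMulVec, hρψ, dotProduct_add, dotProduct_smul,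
      star_orthogonalComponent_dotProduct hψ, smul_zero, add_zero]
  have h_right : (vecMulVec b (star ψ) * ρ).trace = star b ⬝ᵥ b := by
    rw [trace_mul_comm, trace_mul_vecMulVec, dotProduct_mulVec, hψρ, add_dotProduct,
      smul_dotProduct, star_dotProduct_orthogonalComponent hψ, smul_zero, add_zero]
  have h_diag : (vecMulVec ψ (star ψ) * ρ).trace = c := by
    rw [trace_mul_comm, trace_mul_vecMulVec]
  nth_rewrite 1 [hρ.eq_orthogonalCompression_add (ψ := ψ)]
  rw [add_mul, add_mul, add_mul, trace_add, trace_add, trace_add, smul_mul_assoc, trace_smul,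
    h_left, h_right, h_diag, smul_eq_mul]
  ring

theorem PosSemidef.two_mul_re_dotProduct_orthogonalComponent_add_sq_le (hρ : ρ.PosSemidef)
    (hψ : star ψ ⬝ᵥ ψ = 1) :
    2 * RCLike.re (star (ρ.orthogonalComponent ψ) ⬝ᵥ ρ.orthogonalComponent ψ)
      + RCLike.re (star ψ ⬝ᵥ ρ *ᵥ ψ) ^ 2 ≤ RCLike.re (ρ * ρ).trace := by
  have h_nonneg := RCLike.nonneg_iff.mp ((hρ.orthogonalCompression (ψ := ψ)).trace_mul_nonneg hρ)
  have h_im := hρ.isHermitian.im_star_dotProduct_mulVec_self ψ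
  rw [hρ.isHermitian.trace_mul_self_eq hψ, map_add, map_add, RCLike.ofNat_mul_re,
    sq (star ψ ⬝ᵥ ρ *ᵥ ψ), RCLike.mul_re, h_im, mul_zero, sub_zero]
  linarith [h_nonneg.1]

theorem sum_norm_trace_mul_sub_le (hE : ∀ x, (E x).PosSemidef) (hEsum : ∑ x, E x = 1)
    (hρ : ρ.PosSemidef) (hρtr : ρ.trace = 1) (hψ : star ψ ⬝ᵥ ψ = 1) :
    ∑ x, ‖(E x * ρ).trace - star ψ ⬝ᵥ E x *ᵥ ψ‖ ≤ 2 * (1 - RCLike.re (star ψ ⬝ᵥ ρ *ᵥ ψ))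
      + 2 * √(RCLike.re (star (ρ.orthogonalComponent ψ) ⬝ᵥ ρ.orthogonalComponent ψ)) := by
  set R := ρ.orthogonalCompression ψ
  set b := ρ.orthogonalComponent ψ
  set c := star ψ ⬝ᵥ ρ *ᵥ ψ
  set P := vecMulVec ψ (star ψ)
  have hR : R.PosSemidef := hρ.orthogonalCompression
  have h_trR : R.trace = 1 - c := by rw [trace_orthogonalCompression hψ, hρtr]
  have h_normR : ‖R.trace‖ = 1 - RCLike.re c := by
    rw [← RCLike.ofReal_re (K := 𝕜) ‖R.trace‖, RCLike.norm_of_nonneg' hR.trace_nonneg, h_trR,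
      map_sub, RCLike.one_re]
  have h_normP : ‖P.trace‖ = 1 := by rw [trace_vecMulVec, dotProduct_comm, hψ, norm_one]
  have h_dev (x : ι) : (E x * ρ).trace - star ψ ⬝ᵥ E x *ᵥ ψ =
      (E x * R).trace + (star b ⬝ᵥ E x *ᵥ ψ + star ψ ⬝ᵥ E x *ᵥ b) - R.trace * (E x * P).trace := by
    nth_rewrite 1 [hρ.isHermitian.eq_orthogonalCompression_add (ψ := ψ)]
    rw [h_trR, mul_add, mul_add, mul_add, Matrix.mul_smul, trace_add, trace_add, trace_add,
      trace_smul, trace_mul_vecMulVec, trace_mul_vecMulVec, trace_mul_vecMulVec, smul_eq_mul]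
    ring
  calc ∑ x, ‖(E x * ρ).trace - star ψ ⬝ᵥ E x *ᵥ ψ‖
      ≤ ∑ x, (‖(E x * R).trace‖ + (‖star b ⬝ᵥ E x *ᵥ ψ‖ + ‖star ψ ⬝ᵥ E x *ᵥ b‖)
          + ‖R.trace‖ * ‖(E x * P).trace‖) := by
        refine Finset.sum_le_sum fun x _ ↦ ?_
        rw [h_dev, ← norm_mul]
        exact (norm_sub_le _ _).trans
          (add_le_add_left ((norm_add_le _ _).trans (add_le_add_right (norm_add_le _ _) _)) _)
    _ = ‖R.trace‖ + (∑ x, ‖star b ⬝ᵥ E x *ᵥ ψ‖ + ∑ x, ‖star ψ ⬝ᵥ E x *ᵥ b‖)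
          + ‖R.trace‖ * ‖P.trace‖ := by
        rw [Finset.sum_add_distrib, Finset.sum_add_distrib, Finset.sum_add_distrib,
          ← Finset.mul_sum, sum_norm_trace_mul_eq hE hEsum hR,
          sum_norm_trace_mul_eq hE hEsum (posSemidef_vecMulVec_self_star ψ)]
    _ ≤ ‖R.trace‖ + (√(RCLike.re (star b ⬝ᵥ b)) * √(RCLike.re (star ψ ⬝ᵥ ψ))
          + √(RCLike.re (star ψ ⬝ᵥ ψ)) * √(RCLike.re (star b ⬝ᵥ b))) + ‖R.trace‖ * ‖P.trace‖ := by
        gcongr <;> exact sum_norm_dotProduct_mulVec_le hE hEsum _ _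
    _ = _ := by
        rw [h_normR, h_normP, hψ, RCLike.one_re, Real.sqrt_one]
        ring

end PureState

end Matrix

/-- For a density matrix `ρ`, a unit vector `ψ`, and a finite POVM
`(E_x)`, with infidelity `δ_f = 1 − Re⟨ψ, ρψ⟩` and impurity `δ_p = 1 − Tr(ρ²)`, the
total variation distance between the outcome distributions on `ρ` and on `|ψ⟩⟨ψ|` is
at most `δ_f + √(δ_f − δ_f²/2 − δ_p/2)`. -/
theorem stmt_11 {d : ℕ} {S : Type*} [Fintype S]
    (ρ : Matrix (Fin d) (Fin d) ℂ) (hρ : ρ.PosSemidef) (hρtr : ρ.trace = 1)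
    (ψ : Fin d → ℂ) (hψ : ∑ i, (starRingEnd ℂ) (ψ i) * ψ i = 1)
    (E : S → Matrix (Fin d) (Fin d) ℂ)
    (hE : ∀ x, (E x).PosSemidef) (hEsum : ∑ x, E x = 1)
    (δf δp : ℝ)
    (hδf : δf = 1 - (∑ i, (starRingEnd ℂ) (ψ i) * ρ.mulVec ψ i).re)
    (hδp : δp = 1 - ((ρ * ρ).trace).re) :
    (1 / 2) * ∑ x, ‖(E x * ρ).trace
        - ∑ i, (starRingEnd ℂ) (ψ i) * (E x).mulVec ψ i‖
      ≤ δf + Real.sqrt (δf - δf ^ 2 / 2 - δp / 2) := by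
  have h_unit : star ψ ⬝ᵥ ψ = 1 := hψ
  have h_tv := sum_norm_trace_mul_sub_le hE hEsum hρ hρtr h_unit
  have h_purity := hρ.two_mul_re_dotProduct_orthogonalComponent_add_sq_le h_unit
  have h_fid : (star ψ ⬝ᵥ ρ *ᵥ ψ).re = 1 - δf := by rw [hδf, sub_sub_cancel]; rfl
  have h_pur : (ρ * ρ).trace.re = 1 - δp := by rw [hδp, sub_sub_cancel]
  simp only [RCLike.re_to_complex, h_fid, h_pur, sub_sub_cancel] at h_tv h_purity
  set β := (star (ρ.orthogonalComponent ψ) ⬝ᵥ ρ.orthogonalComponent ψ).re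
  have hβ : β ≤ δf - δf ^ 2 / 2 - δp / 2 := by linarith
  calc (1 / 2) * ∑ x, ‖(E x * ρ).trace - ∑ i, (starRingEnd ℂ) (ψ i) * (E x).mulVec ψ i‖
      ≤ (1 / 2) * (2 * δf + 2 * √β) := by gcongr; exact h_tv
    _ = δf + √β := by ring
    _ ≤ δf + √(δf - δf ^ 2 / 2 - δp / 2) := by gcongr
end

section
/- Let ρ be a density matrix on ℂ^d (a positive semidefinite d×d complex matrix with trace 1), let ψ ∈ ℂ^d be a unit vector, let Π₀ = |ψ⟩⟨ψ| be the rank-one orthogonal projection onto ψ, and let Π₁ = I − Π₀. Set δ_f = 1 − Re⟨ψ, ρψ⟩ and δ_p = 1 − Tr(ρ²). Then ‖Π₀·ρ·Π₁‖_F ≤ (1/√2)·√(2δ_f − δ_f² − δ_p), where ‖·‖_F denotes the Frobenius norm. -/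
open Matrix ComplexOrder

/-- The squared Frobenius norm of a complex matrix: `‖A‖_F² = Tr(AᴴA)` (a real number). -/
noncomputable def frobSq {d : ℕ} (A : Matrix (Fin d) (Fin d) ℂ) : ℝ :=
  ((Aᴴ * A).trace).re

lemma frobSq_nonneg {d : ℕ} (A : Matrix (Fin d) (Fin d) ℂ) : 0 ≤ frobSq A := by
  unfold frobSq
  rw [Matrix.trace, Complex.re_sum]
  refine Finset.sum_nonneg fun i _ => ?_
  rw [Matrix.diag_apply, Matrix.mul_apply, Complex.re_sum]
  refine Finset.sum_nonneg fun j _ => ?_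
  rw [Matrix.conjTranspose_apply,
    show (star (A j i) * A j i) = A j i * (starRingEnd ℂ) (A j i) from mul_comm _ _,
    Complex.mul_conj, Complex.ofReal_re]
  exact Complex.normSq_nonneg _

/-- For a density matrix `ρ`, a unit vector `ψ` with rank-one
projection `Pr0 = |ψ⟩⟨ψ|` and `Π₁ = I − Pr0`, with infidelity `δ_f = 1 − Re⟨ψ, ρψ⟩`
and impurity `δ_p = 1 − Tr(ρ²)`, one has
`‖Pr0 ρ Π₁‖_F ≤ (1/√2)·√(2δ_f − δ_f² − δ_p)`. -/
theorem stmt_13 {d : ℕ}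
    (ρ : Matrix (Fin d) (Fin d) ℂ) (hρ : ρ.PosSemidef) (hρtr : ρ.trace = 1)
    (ψ : Fin d → ℂ) (hψ : ∑ i, (starRingEnd ℂ) (ψ i) * ψ i = 1)
    (δf δp : ℝ)
    (hδf : δf = 1 - (∑ i, (starRingEnd ℂ) (ψ i) * ρ.mulVec ψ i).re)
    (hδp : δp = 1 - ((ρ * ρ).trace).re) :
    let Pr0 : Matrix (Fin d) (Fin d) ℂ :=
      Matrix.vecMulVec ψ (fun j => (starRingEnd ℂ) (ψ j))
    Real.sqrt (frobSq (Pr0 * ρ * (1 - Pr0)))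
      ≤ (1 / Real.sqrt 2) * Real.sqrt (2 * δf - δf ^ 2 - δp) := by
  intro P
  set Q : Matrix (Fin d) (Fin d) ℂ := 1 - P with hQdef
  have hρH : ρᴴ = ρ := hρ.1
  -- P is Hermitian
  have hPH : Pᴴ = P := by
    ext i j
    simp [Matrix.conjTranspose_apply, Matrix.vecMulVec_apply, P, mul_comm]
  have hQH : Qᴴ = Q := by
    rw [hQdef, Matrix.conjTranspose_sub, Matrix.conjTranspose_one, hPH]
  -- P is idempotent
  have hPP : P * P = P := by
    ext i j
    rw [Matrix.mul_apply]
    simp only [P, Matrix.vecMulVec_apply]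
    have h1 : ∀ k, (ψ i * (starRingEnd ℂ) (ψ k)) * (ψ k * (starRingEnd ℂ) (ψ j))
        = ((starRingEnd ℂ) (ψ k) * ψ k) * (ψ i * (starRingEnd ℂ) (ψ j)) := by
      intro k; ring
    simp_rw [h1, ← Finset.sum_mul, hψ, one_mul]
  have hQQ : Q * Q = Q := by
    rw [hQdef]
    simp only [Matrix.sub_mul, Matrix.mul_sub, Matrix.one_mul, Matrix.mul_one, hPP]
    abel
  -- the overlap r = Tr(Pρ)
  set r : ℂ := (P * ρ).trace with hrdef
  have hr : r = ∑ i, (starRingEnd ℂ) (ψ i) * ρ.mulVec ψ i := by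
    rw [hrdef, Matrix.trace]
    simp only [Matrix.diag_apply, Matrix.mul_apply, Matrix.vecMulVec_apply, P,
      Matrix.mulVec, dotProduct, Finset.mul_sum]
    rw [Finset.sum_comm]
    congr 1; ext k; congr 1; ext i; ring
  have hrstar : star r = r := by
    have h := Matrix.trace_conjTranspose (P * ρ)
    rw [Matrix.conjTranspose_mul, hPH, hρH, Matrix.trace_mul_comm] at h
    exact h.symm
  have hrre : r = (r.re : ℂ) := by
    have := Complex.conj_eq_iff_re.mp hrstar
    exact this.symm
  -- P ρ P = r • P
  have hPρP : P * ρ * P = r • P := by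
    ext i j
    rw [Matrix.smul_apply]
    rw [Matrix.mul_apply]
    have h1 : ∀ l, (P * ρ) i l * P l j
        = (∑ k, (starRingEnd ℂ) (ψ k) * ρ k l) * ψ l * (ψ i * (starRingEnd ℂ) (ψ j)) := by
      intro l
      rw [Matrix.mul_apply]
      simp only [P, Matrix.vecMulVec_apply]
      rw [Finset.sum_mul, Finset.sum_mul, Finset.sum_mul]
      congr 1; ext k; ring
    simp_rw [h1, ← Finset.sum_mul]
    have h2 : r = ∑ l, (∑ k, (starRingEnd ℂ) (ψ k) * ρ k l) * ψ l := by
      rw [hr]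
      simp only [Matrix.mulVec, dotProduct, Finset.mul_sum, Finset.sum_mul]
      rw [Finset.sum_comm]
      congr 1; ext l; congr 1; ext k; ring
    rw [← h2]
    simp [P, Matrix.vecMulVec_apply, smul_eq_mul]
  -- trace of PρPρ
  have t2 : (ρ * P * (ρ * P)).trace = r * r := by
    have : ρ * P * (ρ * P) = ρ * (P * ρ * P) := by noncomm_ring
    rw [this, hPρP, Matrix.mul_smul, Matrix.trace_smul, Matrix.trace_mul_comm,
      ← hrdef, smul_eq_mul]
  -- frobSq of A = PρQ as a trace
  have hAH : (P * ρ * Q)ᴴ = Q * ρ * P := by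
    rw [Matrix.conjTranspose_mul, Matrix.conjTranspose_mul, hPH, hQH, hρH, Matrix.mul_assoc]
  have t1 : frobSq (P * ρ * Q) = ((Q * ρ * P * ρ * Q).trace).re := by
    unfold frobSq
    rw [hAH]
    congr 2
    have : Q * ρ * P * (P * ρ * Q) = Q * ρ * (P * P) * (ρ * Q) := by noncomm_ring
    rw [this, hPP]
    noncomm_ring
  have t1' : ((Q * ρ * P * ρ * Q).trace) = (ρ * P * (ρ * Q)).trace := by
    rw [Matrix.trace_mul_comm]
    rw [show Q * (Q * ρ * P * ρ) = (Q * Q) * ρ * P * ρ by noncomm_ring, hQQ]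
    rw [show Q * ρ * P * ρ = Q * (ρ * P * ρ) by noncomm_ring, Matrix.trace_mul_comm]
    congr 1
    noncomm_ring
  -- trace of ρQρP also equals frobSq
  have t3 : ((ρ * Q * (ρ * P)).trace).re = frobSq (P * ρ * Q) := by
    unfold frobSq
    rw [hAH]
    have h1 : ((P * ρ * Q) * (Q * ρ * P)).trace = (ρ * Q * (ρ * P)).trace := by
      rw [show (P * ρ * Q) * (Q * ρ * P) = P * ρ * (Q * Q) * ρ * P by noncomm_ring, hQQ]
      rw [show P * ρ * Q * ρ * P = (P * ρ * Q * ρ) * P by noncomm_ring,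
        Matrix.trace_mul_comm]
      rw [show P * (P * ρ * Q * ρ) = (P * P) * (ρ * Q * ρ) by noncomm_ring, hPP]
      rw [Matrix.trace_mul_comm]
      congr 1
      noncomm_ring
    rw [Matrix.trace_mul_comm (Q * ρ * P), h1]
  -- trace of QρQρ is a frobSq, hence nonneg
  have t4 : ((ρ * Q * (ρ * Q)).trace).re = frobSq (Q * ρ * Q) := by
    unfold frobSq
    rw [show (Q * ρ * Q)ᴴ = Q * ρ * Q by
      rw [Matrix.conjTranspose_mul, Matrix.conjTranspose_mul, hQH, hρH, Matrix.mul_assoc]]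
    have h1 : (Q * ρ * Q) * (Q * ρ * Q) = Q * ρ * (Q * Q) * ρ * Q := by noncomm_ring
    rw [h1, hQQ]
    have h2 : (Q * ρ * Q * ρ * Q).trace = (ρ * Q * (ρ * Q)).trace := by
      rw [Matrix.trace_mul_comm]
      have : Q * (Q * ρ * Q * ρ) = (Q * Q) * ρ * Q * ρ := by noncomm_ring
      rw [this, hQQ]
      rw [Matrix.trace_mul_comm]
      congr 1
      noncomm_ring
    rw [h2]
  -- expansion of ρ² 
  have hexp : ρ * ρ = ρ * P * (ρ * P) + ρ * P * (ρ * Q) + ρ * Q * (ρ * P) + ρ * Q * (ρ * Q) := by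
    rw [hQdef]
    noncomm_ring
  have hre : ((ρ * ρ).trace).re
      = (r * r).re + 2 * frobSq (P * ρ * Q) + frobSq (Q * ρ * Q) := by
    rw [hexp]
    simp only [Matrix.trace_add, Complex.add_re]
    rw [t2, ← t1', t3, t4]
    have : ((Q * ρ * P * ρ * Q).trace).re = frobSq (P * ρ * Q) := t1.symm
    rw [this]
    ring
  -- relate to δf, δp
  have hrval : r.re = 1 - δf := by rw [hδf, hr]; ring
  have hrr : (r * r).re = (1 - δf) ^ 2 := by
    rw [hrre]
    push_cast
    rw [← Complex.ofReal_mul]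
    rw [Complex.ofReal_re]
    rw [hrval]; ring
  have h1 : ((ρ * ρ).trace).re = 1 - δp := by rw [hδp]; ring
  rw [h1, hrr] at hre
  have hF1 : 0 ≤ frobSq (P * ρ * Q) := frobSq_nonneg _
  have hF2 : 0 ≤ frobSq (Q * ρ * Q) := frobSq_nonneg _
  set F1 := frobSq (P * ρ * Q) with hF1def
  set F2 := frobSq (Q * ρ * Q) with hF2def
  have hsq : (1 - δf) ^ 2 = 1 - 2 * δf + δf ^ 2 := by ring
  rw [hsq] at hre
  have hA : F1 ≤ (2 * δf - δf ^ 2 - δp) / 2 := by linarith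
  have hX : 0 ≤ 2 * δf - δf ^ 2 - δp := by linarith
  calc Real.sqrt F1 ≤ Real.sqrt ((2 * δf - δf ^ 2 - δp) / 2) :=
        Real.sqrt_le_sqrt hA
    _ = (1 / Real.sqrt 2) * Real.sqrt (2 * δf - δf ^ 2 - δp) := by
        rw [Real.sqrt_div hX]
        ring
end
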